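/- Let N ≥ 1 and γ > 1, and let u be a classical solution of problem (P_γ) on the half space ℝ^N_+. Then there exists a constant C = C(γ) > 0 such that u(x) ≥ C · x_N^{2/(γ+1)} for all x ∈ ℝ^N_+. -/

import Mathlib

open Real Set

/-- The (pointwise) Laplacian of `u : ℝ^N → ℝ`, as the sum of the second
partial derivatives in the coordinate directions. -/
noncomputable def lapl {N : ℕ} (u : EuclideanSpace ℝ (Fin N) → ℝ)
    (x : EuclideanSpace ℝ (Fin N)) : ℝ :=
  ∑ i : Fin N, fderiv ℝ (fun y => fderiv ℝ u y (EuclideanSpace.single i (1 : ℝ))) x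
    (EuclideanSpace.single i (1 : ℝ))

/-- The last coordinate index of `Fin N` (for `N ≥ 1`), playing the role of `x_N`. -/
def lastIdx (N : ℕ) (hN : 1 ≤ N) : Fin N := ⟨N - 1, by omega⟩

/-- The open half space `ℝ^N_+ = {x ∈ ℝ^N : x_N > 0}`. -/
def halfSpace (N : ℕ) (hN : 1 ≤ N) : Set (EuclideanSpace ℝ (Fin N)) :=
  {x | 0 < x (lastIdx N hN)}

/-- A classical solution of problem `(P_γ)` on the half space:
`u ∈ C²(ℝ^N_+) ∩ C(closure ℝ^N_+)`, `u > 0` in `ℝ^N_+`, `u = 0` on `{x_N = 0}`,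
and `-Δu = u^{-γ}` in `ℝ^N_+`. -/
structure IsClassicalSolution (N : ℕ) (hN : 1 ≤ N) (γ : ℝ)
    (u : EuclideanSpace ℝ (Fin N) → ℝ) : Prop where
  smooth : ContDiffOn ℝ 2 u (halfSpace N hN)
  cont : ContinuousOn u (closure (halfSpace N hN))
  pos : ∀ x ∈ halfSpace N hN, 0 < u x
  bdry : ∀ x : EuclideanSpace ℝ (Fin N), x (lastIdx N hN) = 0 → u x = 0
  eq : ∀ x ∈ halfSpace N hN, -lapl u x = (u x) ^ (-γ)

/-!
With `α = 2 / (γ + 1)` one has `(c t^α)^{-γ} = c^{-γ} t^{α-2}`, and `c` is chosen with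
`c^{-γ} = 2α(1-α) c`, so that `φ(t) = c t^α` satisfies `-φ'' = φ^{-γ} / 2`. The comparison function
`v(y) = c y_N^α - δ y_N - ε ‖y‖²` is then a strict subsolution wherever it is positive: there
`y_N < (c / δ)^{1/(1-α)}`, and for small `ε` the half of `φ^{-γ}` left over absorbs the `2Nε`
coming from `ε ‖y‖²`. The part of `{v > 0}` in the half space is bounded and `v ≤ 0 = u` on
`{y_N = 0}`, so if `v` exceeded `u` somewhere, `v - u` would attain a positive interior maximum,
where every second partial of `v - u` is `≤ 0`; this contradicts `-Δv < v^{-γ} < u^{-γ} = -Δu`.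
Hence `u ≥ v`, and letting `δ, ε → 0` gives `u ≥ c x_N^α`.
-/

open Filter Topology

theorem IsLocalMax.nonpos_of_hasDerivAt_of_hasDerivAt {f f' : ℝ → ℝ} {x D : ℝ}
    (hmax : IsLocalMax f x) (hf : ∀ᶠ y in 𝓝 x, HasDerivAt f (f' y) y)
    (hf' : HasDerivAt f' D x) : D ≤ 0 := by
  by_contra! hD
  have hf'x : f' x = 0 := hmax.hasDerivAt_eq_zero hf.self_of_nhds
  have hpos : ∀ᶠ y in 𝓝[>] x, 0 < f' y := by
    filter_upwards [(hasDerivAt_iff_tendsto_slope.mp hf').eventually (eventually_gt_nhds hD)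
      |> nhdsWithin_mono _ (fun y hy => ne_of_gt hy), self_mem_nhdsWithin] with y hy hxy
    rw [slope_def_field, hf'x, sub_zero] at hy
    exact (div_pos_iff_of_pos_right (sub_pos.mpr hxy)).mp hy
  obtain ⟨b, hxb, hb⟩ := (nhdsGT_basis x).eventually_iff.mp
    (hpos.and (nhdsWithin_le_nhds (hf.and hmax)))
  obtain ⟨y, hy⟩ := nonempty_Ioo.mpr hxb
  have hcont : ContinuousOn f (Icc x y) := fun s hs => by
    rcases hs.1.eq_or_lt with rfl | hxs
    · exact hf.self_of_nhds.continuousAt.continuousWithinAt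
    · exact (hb ⟨hxs, hs.2.trans_lt hy.2⟩).2.1.continuousAt.continuousWithinAt
  obtain ⟨ξ, hξ, hslope⟩ := exists_hasDerivAt_eq_slope f f' hy.1 hcont
    fun s hs => (hb ⟨hs.1, hs.2.trans hy.2⟩).2.1
  have : 0 < (f y - f x) / (y - x) := hslope ▸ (hb ⟨hξ.1, hξ.2.trans hy.2⟩).1
  linarith [(hb hy).2.2, (div_pos_iff_of_pos_right (sub_pos.mpr hy.1)).mp this]

theorem lt_rpow_of_mul_lt_mul_rpow {c δ α t : ℝ} (ht : 0 < t) (hc : 0 ≤ c) (hδ : 0 < δ)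
    (hα : α < 1) (h : δ * t < c * t ^ α) : t < (c / δ) ^ (1 - α)⁻¹ := by
  rw [Real.lt_rpow_inv_iff_of_pos ht.le (by positivity) (by linarith), Real.rpow_sub ht,
    Real.rpow_one, div_lt_div_iff₀ (by positivity) hδ]
  linarith

theorem exists_rpow_neg_eq_mul {γ B : ℝ} (hγ : 0 < γ) (hB : 0 < B) :
    ∃ c : ℝ, 0 < c ∧ c ^ (-γ) = B * c := by
  refine ⟨B ^ (-(γ + 1)⁻¹), by positivity, ?_⟩
  rw [← Real.rpow_mul hB.le, ← Real.rpow_one_add' hB.le]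
  · congr 1
    field_simp
    ring
  · rw [← sub_eq_add_neg]
    exact (sub_pos.mpr (inv_lt_one_of_one_lt₀ (by linarith))).ne'

section SecondDerivAlong

variable {E : Type*} [NormedAddCommGroup E] [NormedSpace ℝ E]

theorem hasDerivAt_add_smul (z e : E) (s : ℝ) : HasDerivAt (fun s : ℝ => z + s • e) e s := by
  simpa using ((hasDerivAt_id s).smul_const e).const_add z

def HasSecondDerivAlong (v : E → ℝ) (z e : E) (D : ℝ) : Prop :=
  ∃ g : ℝ → ℝ, (∀ᶠ s in 𝓝 0, HasDerivAt (fun s => v (z + s • e)) (g s) s) ∧ HasDerivAt g D 0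

theorem HasSecondDerivAlong.sub {v w : E → ℝ} {z e : E} {D D' : ℝ}
    (hv : HasSecondDerivAlong v z e D) (hw : HasSecondDerivAlong w z e D') :
    HasSecondDerivAlong (fun y => v y - w y) z e (D - D') := by
  obtain ⟨g, hg, hg'⟩ := hv
  obtain ⟨h, hh, hh'⟩ := hw
  exact ⟨fun s => g s - h s, by filter_upwards [hg, hh] with s using HasDerivAt.sub, hg'.sub hh'⟩

theorem ContDiffAt.hasSecondDerivAlong {u : E → ℝ} {z : E} (hu : ContDiffAt ℝ 2 u z) (e : E) :
    HasSecondDerivAlong u z e (fderiv ℝ (fun y => fderiv ℝ u y e) z e) := by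
  have hline : Tendsto (fun s : ℝ => z + s • e) (𝓝 0) (𝓝 z) := by
    simpa using (hasDerivAt_add_smul z e 0).continuousAt.tendsto
  refine ⟨fun s => fderiv ℝ u (z + s • e) e, ?_, ?_⟩
  · filter_upwards [hline.eventually (hu.eventually (by simp))] with s hs
    exact (hs.differentiableAt (by simp)).hasFDerivAt.comp_hasDerivAt s (hasDerivAt_add_smul z e s)
  · have hdiff : DifferentiableAt ℝ (fun y => fderiv ℝ u y e) z :=
      ((hu.fderiv_right (m := 1) le_rfl).differentiableAt one_ne_zero).clm_apply
        (differentiableAt_const e)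
    exact hdiff.hasFDerivAt.comp_hasDerivAt_of_eq 0 (hasDerivAt_add_smul z e 0) (by simp)

theorem IsLocalMax.nonpos_of_hasSecondDerivAlong {w : E → ℝ} {z e : E} {D : ℝ}
    (hmax : IsLocalMax w z) (hw : HasSecondDerivAlong w z e D) : D ≤ 0 := by
  obtain ⟨g, hg, hg'⟩ := hw
  refine IsLocalMax.nonpos_of_hasDerivAt_of_hasDerivAt (f := fun s => w (z + s • e)) ?_ hg hg'
  exact IsLocalMax.comp_continuous (g := fun s : ℝ => z + s • e) (by simpa using hmax)
    (hasDerivAt_add_smul z e 0).continuousAt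

end SecondDerivAlong

theorem IsLocalMax.sum_le_lapl {N : ℕ} {u v : EuclideanSpace ℝ (Fin N) → ℝ}
    {z : EuclideanSpace ℝ (Fin N)} (hmax : IsLocalMax (fun y => v y - u y) z)
    (hu : ContDiffAt ℝ 2 u z) {D : Fin N → ℝ}
    (hv : ∀ i, HasSecondDerivAlong v z (EuclideanSpace.single i 1) (D i)) :
    ∑ i, D i ≤ lapl u z :=
  Finset.sum_le_sum fun i _ =>
    sub_nonpos.mp (hmax.nonpos_of_hasSecondDerivAlong ((hv i).sub (hu.hasSecondDerivAlong _)))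

section Barrier

variable {F : Type*} [NormedAddCommGroup F] [InnerProductSpace ℝ F] (L : F →L[ℝ] ℝ)

noncomputable def barrier (c α δ ε : ℝ) (y : F) : ℝ :=
  c * L y ^ α - δ * L y - ε * ‖y‖ ^ 2

theorem hasSecondDerivAlong_barrier (c α δ ε : ℝ) {z : F} (hz : 0 < L z) (e : F) :
    HasSecondDerivAlong (barrier L c α δ ε) z e
      (c * α * (α - 1) * L z ^ (α - 2) * L e ^ 2 - 2 * ε * ‖e‖ ^ 2) := by
  have hL (s : ℝ) : HasDerivAt (fun s : ℝ => L (z + s • e)) (L e) s :=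
    L.hasFDerivAt.comp_hasDerivAt s (hasDerivAt_add_smul z e s)
  have hpos : ∀ᶠ s in 𝓝 (0 : ℝ), 0 < L (z + s • e) :=
    continuousAt_const.eventually_lt (hL 0).continuousAt (by simpa using hz)
  refine ⟨fun s => c * (L e * α * L (z + s • e) ^ (α - 1)) - δ * L e
    - ε * (2 * inner ℝ (z + s • e) e), ?_, ?_⟩
  · filter_upwards [hpos] with s hs
    exact ((((hL s).rpow_const (Or.inl hs.ne')).const_mul c).sub ((hL s).const_mul δ)).sub
      ((hasDerivAt_add_smul z e s).norm_sq.const_mul ε)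
  · have hinner := (hasDerivAt_add_smul z e 0).inner ℝ (hasDerivAt_const (0 : ℝ) e)
    refine (((((hL 0).rpow_const (p := α - 1) (Or.inl (by simpa using hz.ne'))).const_mul
      (L e * α)).const_mul c).sub_const (δ * L e) |>.sub ((hinner.const_mul 2).const_mul ε))
      |>.congr_deriv ?_
    simp only [zero_smul, add_zero, inner_zero_right, zero_add, real_inner_self_eq_norm_sq]
    ring_nf

variable {c α δ ε : ℝ}

theorem continuous_barrier (δ ε : ℝ) (hα : 0 ≤ α) : Continuous (barrier L c α δ ε) :=
  ((continuous_const.mul ((Real.continuous_rpow_const hα).comp L.continuous)).sub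
    (continuous_const.mul L.continuous)).sub (continuous_const.mul (continuous_norm.pow 2))

theorem barrier_nonpos_of_eq_zero (c δ : ℝ) (hα : α ≠ 0) (hε : 0 ≤ ε) {y : F} (hy : L y = 0) :
    barrier L c α δ ε y ≤ 0 := by
  simp only [barrier, hy, Real.zero_rpow hα]
  nlinarith [sq_nonneg ‖y‖]

theorem lt_of_barrier_pos (hc : 0 ≤ c) (hδ : 0 < δ) (hα : α < 1) (hε : 0 ≤ ε) {y : F}
    (hy : 0 < L y) (hv : 0 < barrier L c α δ ε y) : L y < (c / δ) ^ (1 - α)⁻¹ := by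
  refine lt_rpow_of_mul_lt_mul_rpow hy hc hδ hα ?_
  unfold barrier at hv
  nlinarith [sq_nonneg ‖y‖]

/- `Real.rpow` takes junk values at negative bases, hence the restriction to `L y > 0`. -/
theorem isBounded_barrier_pos (hc : 0 ≤ c) (hδ : 0 < δ) (hα₀ : 0 ≤ α) (hα : α < 1)
    (hε : 0 < ε) : Bornology.IsBounded {y | 0 < L y ∧ 0 < barrier L c α δ ε y} := by
  refine (Metric.isBounded_closedBall (x := 0) (r := √(c * ((c / δ) ^ (1 - α)⁻¹) ^ α / ε))).subset
    fun y ⟨hy, hv⟩ => ?_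
  rw [mem_closedBall_zero_iff, Real.le_sqrt (norm_nonneg y) (by positivity), le_div_iff₀ hε]
  have hR := Real.rpow_le_rpow hy.le (lt_of_barrier_pos L hc hδ hα hε.le hy hv).le hα₀
  unfold barrier at hv
  nlinarith [mul_le_mul_of_nonneg_left hR hc]

end Barrier

theorem IsLocalMax.barrier_le_lapl {N : ℕ} {k : Fin N} {c α δ ε : ℝ}
    {u : EuclideanSpace ℝ (Fin N) → ℝ} {z : EuclideanSpace ℝ (Fin N)}
    (hmax : IsLocalMax (fun y => barrier (EuclideanSpace.proj k) c α δ ε y - u y) z)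
    (hz : 0 < z k) (hu : ContDiffAt ℝ 2 u z) :
    c * α * (α - 1) * z k ^ (α - 2) - 2 * N * ε ≤ lapl u z := by
  have hsum (A : ℝ) : ∑ i : Fin N, (A * EuclideanSpace.single i (1 : ℝ) k ^ 2
      - 2 * ε * ‖EuclideanSpace.single i (1 : ℝ)‖ ^ 2) = A - 2 * N * ε := by
    simp only [Finset.sum_sub_distrib, PiLp.single_apply, PiLp.norm_single, eq_comm, ite_pow,
      one_pow, norm_one, ne_eq, OfNat.zero_ne_ofNat, not_false_eq_true, zero_pow, mul_ite,
      mul_one, mul_zero, Finset.sum_ite_eq, Finset.mem_univ, ↓reduceIte, Finset.sum_const,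
      Finset.card_univ, Fintype.card_fin, nsmul_eq_mul]
    ring
  rw [← hsum]
  exact hmax.sum_le_lapl hu fun i => hasSecondDerivAlong_barrier _ c α δ ε hz _

section HalfSpace

theorem isOpen_halfSpace (N : ℕ) (hN : 1 ≤ N) : IsOpen (halfSpace N hN) :=
  isOpen_lt continuous_const (EuclideanSpace.proj _).continuous

theorem closure_halfSpace_subset (N : ℕ) (hN : 1 ≤ N) :
    closure (halfSpace N hN) ⊆ {y | 0 ≤ y (lastIdx N hN)} :=
  closure_minimal (fun _ hy => le_of_lt (α := ℝ) hy)
    (isClosed_le continuous_const (EuclideanSpace.proj _).continuous)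

variable {N : ℕ} {hN : 1 ≤ N}

theorem IsClassicalSolution.exists_isLocalMax_sub {γ : ℝ} {u v : EuclideanSpace ℝ (Fin N) → ℝ}
    (sol : IsClassicalSolution N hN γ u) (hv : Continuous v)
    (hbdd : Bornology.IsBounded {y | 0 < y (lastIdx N hN) ∧ 0 < v y})
    (hv0 : ∀ y, y (lastIdx N hN) = 0 → v y ≤ 0) {x : EuclideanSpace ℝ (Fin N)}
    (hx : x ∈ halfSpace N hN) (hlt : u x < v x) :
    ∃ z ∈ halfSpace N hN, u z < v z ∧ IsLocalMax (fun y => v y - u y) z := by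
  set S := halfSpace N hN ∩ (fun y => v y - u y) ⁻¹' Ioi 0
  have hxS : x ∈ S := ⟨hx, sub_pos.mpr hlt⟩
  have hSopen : IsOpen S := (hv.continuousOn.sub sol.smooth.continuousOn).isOpen_inter_preimage
    (isOpen_halfSpace N hN) isOpen_Ioi
  have hScpt : IsCompact (closure S) :=
    (hbdd.subset fun y hy => ⟨hy.1, (sol.pos y hy.1).trans (sub_pos.mp hy.2)⟩).isCompact_closure
  have hSH : closure S ⊆ closure (halfSpace N hN) := closure_mono inter_subset_left
  obtain ⟨z, hzS, hmax⟩ := hScpt.exists_isMaxOn ⟨x, subset_closure hxS⟩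
    (hv.continuousOn.sub (sol.cont.mono hSH))
  have huv : u z < v z := by
    have : v x - u x ≤ v z - u z := hmax (subset_closure hxS)
    linarith
  have hz : z ∈ halfSpace N hN := by
    rcases (closure_halfSpace_subset N hN (hSH hzS)).out.eq_or_lt with h | h
    · linarith [sol.bdry z h.symm, hv0 z h.symm]
    · exact h
  exact ⟨z, hz, huv, hmax.isLocalMax (mem_of_superset (hSopen.mem_nhds ⟨hz, sub_pos.mpr huv⟩)
    subset_closure)⟩

theorem IsClassicalSolution.barrier_le {γ : ℝ} {u : EuclideanSpace ℝ (Fin N) → ℝ}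
    (sol : IsClassicalSolution N hN γ u) (hγ : 1 < γ) {α c δ ε : ℝ} (hα : α = 2 / (γ + 1))
    (hc : 0 < c) (hcγ : c ^ (-γ) = 2 * α * (1 - α) * c) (hδ : 0 < δ) (hε : 0 < ε)
    (hεR : 2 * N * ε ≤ c * α * (1 - α) * ((c / δ) ^ (1 - α)⁻¹) ^ (α - 2))
    {x : EuclideanSpace ℝ (Fin N)} (hx : x ∈ halfSpace N hN) :
    barrier (EuclideanSpace.proj (lastIdx N hN)) c α δ ε x ≤ u x := by
  have hα₀ : 0 < α := by rw [hα]; positivity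
  have hα₁ : α < 1 := by rw [hα, div_lt_one (by linarith)]; linarith
  by_contra! hlt
  obtain ⟨z, hz, huv, hmax⟩ := sol.exists_isLocalMax_sub (continuous_barrier _ δ ε hα₀.le)
    (isBounded_barrier_pos (EuclideanSpace.proj (lastIdx N hN)) hc.le hδ hα₀.le hα₁ hε)
    (fun y => barrier_nonpos_of_eq_zero (EuclideanSpace.proj (lastIdx N hN)) c δ hα₀.ne' hε.le
      (y := y)) hx hlt
  have hlap := hmax.barrier_le_lapl hz (sol.smooth.contDiffAt ((isOpen_halfSpace N hN).mem_nhds hz))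
  rw [← neg_neg (lapl u z), sol.eq z hz] at hlap
  set t := z (lastIdx N hN)
  have ht : 0 < t := hz
  have hut : 2 * α * (1 - α) * c * t ^ (α - 2) < u z ^ (-γ) := by
    have hvt : u z < c * t ^ α := huv.trans_le
      (show c * t ^ α - δ * t - ε * ‖z‖ ^ 2 ≤ c * t ^ α by nlinarith [sq_nonneg ‖z‖])
    calc 2 * α * (1 - α) * c * t ^ (α - 2) = (c * t ^ α) ^ (-γ) := by
          rw [Real.mul_rpow hc.le (by positivity), ← Real.rpow_mul ht.le, hcγ, hα]
          congr 2
          field_simp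
          ring
      _ < u z ^ (-γ) := Real.rpow_lt_rpow_of_neg (sol.pos z hz) hvt (by linarith)
  have htR : ((c / δ) ^ (1 - α)⁻¹) ^ (α - 2) < t ^ (α - 2) :=
    Real.rpow_lt_rpow_of_neg ht
      (lt_of_barrier_pos _ hc.le hδ hα₁ hε.le hz ((sol.pos z hz).trans huv)) (by linarith)
  have hK : 0 < c * α * (1 - α) := by have := sub_pos.mpr hα₁; positivity
  linarith [mul_lt_mul_of_pos_left htR hK]

end HalfSpace

/-- for `γ > 1` there is a constant `C = C(γ) > 0` such that every
classical solution `u` of `(P_γ)` on the half space satisfies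
`u(x) ≥ C · x_N^{2/(γ+1)}`. -/
theorem lower_bound_power (γ : ℝ) (hγ : 1 < γ) :
    ∃ C : ℝ, 0 < C ∧ ∀ (N : ℕ) (hN : 1 ≤ N) (u : EuclideanSpace ℝ (Fin N) → ℝ),
      IsClassicalSolution N hN γ u →
      ∀ x ∈ halfSpace N hN, C * (x (lastIdx N hN)) ^ (2 / (γ + 1)) ≤ u x := by
  set α := 2 / (γ + 1) with hα
  have hα₁ : 0 < 1 - α := by rw [sub_pos, hα, div_lt_one (by linarith)]; linarith
  obtain ⟨c, hc, hcγ⟩ :=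
    exists_rpow_neg_eq_mul (γ := γ) (B := 2 * α * (1 - α)) (by linarith) (by positivity)
  refine ⟨c, hc, fun N hN u sol x hx => le_of_forall_pos_le_add fun η hη => ?_⟩
  set t := x (lastIdx N hN)
  have ht : 0 < t := hx
  set δ := η / (2 * t)
  have hN₀ : (0 : ℝ) < N := by exact_mod_cast hN
  set ε := min (c * α * (1 - α) * ((c / δ) ^ (1 - α)⁻¹) ^ (α - 2) / (2 * N))
    (η / (2 * (‖x‖ ^ 2 + 1)))
  have hε : 0 < ε := lt_min (by positivity) (by positivity)
  have hεR : 2 * N * ε ≤ _ := (le_div_iff₀' (by positivity)).mp (min_le_left _ _)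
  have hεx : ε * (2 * (‖x‖ ^ 2 + 1)) ≤ η := (le_div_iff₀ (by positivity)).mp (min_le_right _ _)
  have hb := sol.barrier_le hγ hα hc hcγ (by positivity) hε hεR hx
  have hδt : δ * t = η / 2 := by simp only [δ]; field_simp
  change c * t ^ α - δ * t - ε * ‖x‖ ^ 2 ≤ u x at hb
  linarith
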